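/- arXiv:2507.22311 — 3 statements merged into one kernel-verified Lean document; each statement's English description precedes it below -/
import Mathlib

section
/- Let f: ℝⁿ → ℝ be differentiable such that f + (ℓ/2)‖·‖² is convex for some real ℓ, let γ > 0, and suppose xᵢ = yᵢ + γ∇f(yᵢ) for i = 1, 2. Then ⟨x₂ - x₁, y₂ - y₁⟩ ≥ (1 - γℓ)‖y₂ - y₁‖². -/
open scoped RealInnerProductSpace

section aux

variable {n : ℕ}

/-- Gradient monotonicity for a weakly convex function. -/
lemma grad_mono_aux {f : EuclideanSpace ℝ (Fin n) → ℝ}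
    {f' : EuclideanSpace ℝ (Fin n) → EuclideanSpace ℝ (Fin n)}
    (hf : ∀ u, HasGradientAt f (f' u) u) {ℓ : ℝ}
    (hconv : ConvexOn ℝ Set.univ (fun x => f x + (ℓ / 2) * ‖x‖ ^ 2))
    (y₁ y₂ : EuclideanSpace ℝ (Fin n)) :
    ⟪f' y₁, y₂ - y₁⟫ + ℓ * ⟪y₁, y₂ - y₁⟫ ≤ ⟪f' y₂, y₂ - y₁⟫ + ℓ * ⟪y₂, y₂ - y₁⟫ := by
  set v := y₂ - y₁ with hv
  set L : ℝ →ᵃ[ℝ] EuclideanSpace ℝ (Fin n) := AffineMap.lineMap (k := ℝ) y₁ y₂ with hL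
  set φ : ℝ → ℝ := fun t => f (L t) + (ℓ / 2) * ‖L t‖ ^ 2 with hφ
  have hLt : ∀ t : ℝ, L t = y₁ + t • v := by
    intro t
    simp [hL, AffineMap.lineMap_apply, hv]
    module
  -- derivative of φ at t
  have hderiv : ∀ t : ℝ, HasDerivAt φ (⟪f' (L t), v⟫ + ℓ * ⟪L t, v⟫) t := by
    intro t
    have hc : HasDerivAt (fun s : ℝ => L s) v t := by
      have heq : (fun s : ℝ => L s) = fun s : ℝ => y₁ + s • v := funext hLt
      rw [heq]
      simpa using ((hasDerivAt_id t).smul_const v).const_add y₁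
    have h1 : HasDerivAt (fun s : ℝ => f (L s)) ⟪f' (L t), v⟫ t := by
      have hF : HasFDerivAt f ((InnerProductSpace.toDual ℝ _) (f' (L t))) (L t) :=
        (hf (L t))
      have := hF.comp_hasDerivAt t hc
      simpa [InnerProductSpace.toDual_apply_apply, Function.comp_def] using this
    have h2 : HasDerivAt (fun s : ℝ => (ℓ / 2) * ‖L s‖ ^ 2) (ℓ * ⟪L t, v⟫) t := by
      have heq : ∀ s : ℝ, (ℓ / 2) * ‖L s‖ ^ 2
          = (ℓ / 2) * (‖y₁‖ ^ 2 + 2 * s * ⟪y₁, v⟫ + s ^ 2 * ‖v‖ ^ 2) := by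
        intro s
        rw [hLt s, norm_add_sq_real, real_inner_smul_right, norm_smul,
          Real.norm_eq_abs, mul_pow, sq_abs]
        ring
      have hpoly : HasDerivAt
          (fun s : ℝ => (ℓ / 2) * (‖y₁‖ ^ 2 + 2 * s * ⟪y₁, v⟫ + s ^ 2 * ‖v‖ ^ 2))
          ((ℓ / 2) * (2 * ⟪y₁, v⟫ + 2 * t * ‖v‖ ^ 2)) t := by
        have h := (((hasDerivAt_id t).const_mul 2 |>.mul_const ⟪y₁, v⟫).const_add
          (‖y₁‖ ^ 2)).add ((hasDerivAt_pow 2 t).mul_const (‖v‖ ^ 2))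
        have h' := h.const_mul (ℓ / 2)
        refine h'.congr_deriv ?_
        norm_num
      have hval : (ℓ / 2) * (2 * ⟪y₁, v⟫ + 2 * t * ‖v‖ ^ 2) = ℓ * ⟪L t, v⟫ := by
        rw [hLt t, inner_add_left, real_inner_smul_left, real_inner_self_eq_norm_sq]
        ring
      rw [← hval]
      exact HasDerivAt.congr_of_eventuallyEq hpoly
        (Filter.Eventually.of_forall fun s => (heq s))
    exact h1.add h2
  -- convexity of φ
  have hφconv : ConvexOn ℝ Set.univ φ := by
    have := hconv.comp_affineMap L
    simpa [hφ, Function.comp_def] using this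
  have h01 : (0 : ℝ) < 1 := one_pos
  have hL0 : L 0 = y₁ := by simp [hL]
  have hL1 : L 1 = y₂ := by simp [hL]
  have hle1 : ⟪f' (L 0), v⟫ + ℓ * ⟪L 0, v⟫ ≤ slope φ 0 1 :=
    hφconv.le_slope_of_hasDerivAt (Set.mem_univ 0) (Set.mem_univ 1) h01 (hderiv 0)
  have hle2 : slope φ 0 1 ≤ ⟪f' (L 1), v⟫ + ℓ * ⟪L 1, v⟫ :=
    hφconv.slope_le_of_hasDerivAt (Set.mem_univ 0) (Set.mem_univ 1) h01 (hderiv 1)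
  rw [hL0] at hle1
  rw [hL1] at hle2
  linarith

end aux

/-- If `f` is differentiable with `f + (ℓ/2)‖·‖²` convex, `γ > 0`, and
`xᵢ = yᵢ + γ ∇f(yᵢ)`, then `⟪x₂ - x₁, y₂ - y₁⟫ ≥ (1 - γℓ) ‖y₂ - y₁‖²`. -/
theorem prox_coercivity_weakly_convex {n : ℕ} (f : EuclideanSpace ℝ (Fin n) → ℝ)
    (f' : EuclideanSpace ℝ (Fin n) → EuclideanSpace ℝ (Fin n))
    (hf : ∀ u, HasGradientAt f (f' u) u)
    (ℓ : ℝ)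
    (hconv : ConvexOn ℝ Set.univ (fun x => f x + (ℓ / 2) * ‖x‖ ^ 2))
    (γ : ℝ) (hγ : 0 < γ) (x₁ x₂ y₁ y₂ : EuclideanSpace ℝ (Fin n))
    (h₁ : x₁ = y₁ + γ • f' y₁) (h₂ : x₂ = y₂ + γ • f' y₂) :
    ⟪x₂ - x₁, y₂ - y₁⟫ ≥ (1 - γ * ℓ) * ‖y₂ - y₁‖ ^ 2 := by
  have hmono := grad_mono_aux hf hconv y₁ y₂
  have hx : x₂ - x₁ = (y₂ - y₁) + γ • (f' y₂ - f' y₁) := by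
    rw [h₁, h₂]; module
  have hinner : ⟪x₂ - x₁, y₂ - y₁⟫
      = ‖y₂ - y₁‖ ^ 2 + γ * (⟪f' y₂, y₂ - y₁⟫ - ⟪f' y₁, y₂ - y₁⟫) := by
    rw [hx, inner_add_left, real_inner_smul_left, real_inner_self_eq_norm_sq,
      inner_sub_left]
  have hy : ⟪y₂, y₂ - y₁⟫ - ⟪y₁, y₂ - y₁⟫ = ‖y₂ - y₁‖ ^ 2 := by
    rw [← inner_sub_left, real_inner_self_eq_norm_sq]
  have hy' : ℓ * (⟪y₂, y₂ - y₁⟫ - ⟪y₁, y₂ - y₁⟫) = ℓ * ‖y₂ - y₁‖ ^ 2 := by rw [hy]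
  have hd : ⟪f' y₂, y₂ - y₁⟫ - ⟪f' y₁, y₂ - y₁⟫ + ℓ * ‖y₂ - y₁‖ ^ 2 ≥ 0 := by
    rw [← hy']; linarith
  have hkey := mul_nonneg hγ.le hd
  rw [hinner]
  nlinarith [hkey]
end

section
/- Let g: ℝᵖ → ℝ, γ > 0, and define L_γ(u, v, s) := f(u) + g(v) + (1/γ)⟨s - u, v - u⟩ - (1/(2γ))‖v - u‖². Suppose v⁺ minimizes w ↦ g(w) + (1/(2γ))‖2u⁺ - s - w‖² (i.e., v⁺ ∈ Prox_{γg}(2u⁺ - s)). Then for every v: L_γ(u⁺, v⁺, s) - L_γ(u⁺, v, s) ≤ -(1/γ)‖v⁺ - u⁺‖² + (1/γ)‖v - u⁺‖². -/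
open scoped RealInnerProductSpace

/-- If `v⁺` minimizes `w ↦ g w + (1/(2γ))‖2u⁺ - s - w‖²`, then
`L_γ(u⁺,v⁺,s) - L_γ(u⁺,v,s) ≤ -(1/γ)‖v⁺ - u⁺‖² + (1/γ)‖v - u⁺‖²` for every `v`. -/
theorem DR_merit_v_decrease {p : ℕ} (f g : EuclideanSpace ℝ (Fin p) → ℝ)
    (γ : ℝ) (hγ : 0 < γ) (uplus vplus s : EuclideanSpace ℝ (Fin p))
    (hmin : IsMinOn (fun w => g w + (1 / (2 * γ)) * ‖2 • uplus - s - w‖ ^ 2)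
      Set.univ vplus) :
    ∀ v : EuclideanSpace ℝ (Fin p),
      (f uplus + g vplus + (1 / γ) * ⟪s - uplus, vplus - uplus⟫
          - (1 / (2 * γ)) * ‖vplus - uplus‖ ^ 2)
        - (f uplus + g v + (1 / γ) * ⟪s - uplus, v - uplus⟫
          - (1 / (2 * γ)) * ‖v - uplus‖ ^ 2)
      ≤ -(1 / γ) * ‖vplus - uplus‖ ^ 2 + (1 / γ) * ‖v - uplus‖ ^ 2 := by
  intro v
  have key : ∀ w : EuclideanSpace ℝ (Fin p),
      ‖2 • uplus - s - w‖ ^ 2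
        = ‖s - uplus‖ ^ 2 + 2 * ⟪s - uplus, w - uplus⟫ + ‖w - uplus‖ ^ 2 := by
    intro w
    have hrw : 2 • uplus - s - w = -((s - uplus) + (w - uplus)) := by
      module
    rw [hrw, norm_neg, norm_add_sq_real]
  have h := hmin (Set.mem_univ v)
  simp only [key, Set.mem_setOf_eq] at h
  have h1γ : 1 / γ = 2 * (1 / (2 * γ)) := by field_simp
  rw [h1γ]
  nlinarith [h]
end

section
/- Let (Yₙ), (Wₙ), (Zₙ) be nonnegative random variables adapted to a filtration (Fₙ), with Σₙ Wₙ < ∞ almost surely and E[Y_{n+1} | Fₙ] ≤ Yₙ + Wₙ - Zₙ for all n. Then almost surely limₙ Yₙ exists and is finite, and Σₙ Zₙ < ∞. -/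
open MeasureTheory Filter Topology

/-- Robbins–Siegmund supermartingale convergence theorem (case `βₙ = 0`):
if `Yₙ, Wₙ, Zₙ ≥ 0` are adapted, `Σ Wₙ < ∞` a.s., and
`E[Y_{n+1} | Fₙ] ≤ Yₙ + Wₙ - Zₙ`, then a.s. `lim Yₙ` exists finitely and `Σ Zₙ < ∞`. -/
theorem robbins_siegmund {Ω : Type*} {m0 : MeasurableSpace Ω} {μ : Measure Ω}
    [IsProbabilityMeasure μ] (ℱ : Filtration ℕ m0)
    (Y W Z : ℕ → Ω → ℝ)
    (hYadapted : Adapted ℱ Y) (hWadapted : Adapted ℱ W) (hZadapted : Adapted ℱ Z)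
    (hYnn : ∀ n ω, 0 ≤ Y n ω) (hWnn : ∀ n ω, 0 ≤ W n ω) (hZnn : ∀ n ω, 0 ≤ Z n ω)
    (hYint : ∀ n, Integrable (Y n) μ) (hWint : ∀ n, Integrable (W n) μ)
    (hZint : ∀ n, Integrable (Z n) μ)
    (hWsum : ∀ᵐ ω ∂μ, Summable fun n => W n ω)
    (hrec : ∀ n, μ[Y (n + 1) | ℱ n] ≤ᵐ[μ] fun ω => Y n ω + W n ω - Z n ω) :
    ∀ᵐ ω ∂μ,
      (∃ l : ℝ, Tendsto (fun n => Y n ω) atTop (nhds l)) ∧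
        Summable fun n => Z n ω := by
  classical
  set S : ℕ → Ω → ℝ := fun n ω => ∑ k ∈ Finset.range n, W k ω with hSdef
  set P : ℕ → Ω → ℝ := fun n ω => ∑ k ∈ Finset.range n, Z k ω with hPdef
  set D : ℕ → Ω → ℝ := fun k ω => Y (k + 1) ω - Y k ω + Z k ω - W k ω with hDdef
  have hPnn : ∀ n ω, 0 ≤ P n ω := fun n ω => Finset.sum_nonneg fun k _ => hZnn k ω
  have hSmono : ∀ ω, Monotone fun n => S n ω := fun ω =>
    monotone_nat_of_le_succ fun n => by
      simp only [hSdef, Finset.sum_range_succ]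
      linarith [hWnn n ω]
  have htel : ∀ n ω, Y 0 ω + ∑ k ∈ Finset.range n, D k ω = Y n ω + P n ω - S n ω := by
    intro n ω
    induction n with
    | zero => simp [hPdef, hSdef]
    | succ n ih =>
      rw [Finset.sum_range_succ, ← add_assoc, ih]
      simp only [hDdef, hPdef, hSdef, Finset.sum_range_succ]
      ring
  set ξ : ℕ → ℕ → Ω → ℝ :=
    fun a k => Set.indicator {ω | S (k + 1) ω ≤ (a : ℝ)} (fun _ => (1 : ℝ)) with hξdef
  set N : ℕ → ℕ → Ω → ℝ :=
    fun a n ω => Y 0 ω + ∑ k ∈ Finset.range n, ξ a k ω * D k ω with hNdef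
  have hξapp : ∀ a k ω, ξ a k ω = if S (k + 1) ω ≤ (a : ℝ) then 1 else 0 := by
    intro a k ω
    simp [hξdef, Set.indicator_apply]
  have hξnn : ∀ a k ω, 0 ≤ ξ a k ω := by
    intro a k ω; rw [hξapp]; split <;> norm_num
  have hξbd : ∀ a k ω, ‖ξ a k ω‖ ≤ 1 := by
    intro a k ω; rw [hξapp]; split <;> simp
  -- measurability
  have hSmeas : ∀ k, StronglyMeasurable[ℱ k] (S (k + 1)) := by
    intro k
    have : Measurable[ℱ k] (fun ω => ∑ j ∈ Finset.range (k + 1), W j ω) := by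
      apply Finset.measurable_sum
      intro j hj
      exact (hWadapted j).mono
        (ℱ.mono (by simpa [Nat.lt_succ_iff] using hj)) le_rfl
    exact this.stronglyMeasurable
  have hξmeas : ∀ a k, StronglyMeasurable[ℱ k] (ξ a k) := by
    intro a k
    exact stronglyMeasurable_const.indicator
      (measurableSet_le (hSmeas k).measurable measurable_const)
  have hDmeas : ∀ k, StronglyMeasurable[ℱ (k + 1)] (D k) := by
    intro k
    have : Measurable[ℱ (k + 1)] (fun ω => Y (k + 1) ω - Y k ω + Z k ω - W k ω) := by
      have hY1 := (hYadapted (k + 1))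
      have hY0 := (hYadapted k).mono (ℱ.mono k.le_succ) le_rfl
      have hZ0 := (hZadapted k).mono (ℱ.mono k.le_succ) le_rfl
      have hW0 := (hWadapted k).mono (ℱ.mono k.le_succ) le_rfl
      exact ((hY1.sub hY0).add hZ0).sub hW0
    exact this.stronglyMeasurable
  have hDint : ∀ k, Integrable (D k) μ := by
    intro k
    have : Integrable (fun ω => Y (k + 1) ω - Y k ω + Z k ω - W k ω) μ :=
      (((hYint (k + 1)).sub (hYint k)).add (hZint k)).sub (hWint k)
    exact this
  have hξDint : ∀ a k, Integrable (fun ω => ξ a k ω * D k ω) μ := by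
    intro a k
    exact (hDint k).bdd_mul (c := 1)
      (((hξmeas a k).mono (ℱ.le k)).aestronglyMeasurable)
      (ae_of_all _ fun ω => hξbd a k ω)
  have hNadapted : ∀ a, Adapted ℱ (N a) := by
    intro a n
    have : Measurable[ℱ n] (fun ω => Y 0 ω + ∑ k ∈ Finset.range n, ξ a k ω * D k ω) := by
      apply Measurable.add
      · exact (hYadapted 0).mono (ℱ.mono (Nat.zero_le n)) le_rfl
      · apply Finset.measurable_sum
        intro k hk
        have hk' : k + 1 ≤ n := Finset.mem_range.1 hk
        exact ((hξmeas a k).measurable.mono (ℱ.mono (le_trans k.le_succ hk')) le_rfl).mul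
          ((hDmeas k).measurable.mono (ℱ.mono hk') le_rfl)
    exact this
  have hNint : ∀ a n, Integrable (N a n) μ := by
    intro a n
    have : Integrable (fun ω => Y 0 ω + ∑ k ∈ Finset.range n, ξ a k ω * D k ω) μ :=
      (hYint 0).add (integrable_finset_sum _ fun k _ => hξDint a k)
    exact this
  -- supermartingale property
  have hNsuper : ∀ a, Supermartingale (N a) ℱ μ := by
    intro a
    refine supermartingale_nat (hNadapted a).stronglyAdapted (hNint a) fun n => ?_
    have hsplit : N a (n + 1) = N a n + ξ a n * D n := by
      funext ω
      simp only [hNdef, Finset.sum_range_succ, Pi.add_apply, Pi.mul_apply]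
      ring
    have hD0 : μ[D n | ℱ n] ≤ᵐ[μ] 0 := by
      have hg : Integrable (fun ω => Z n ω - Y n ω - W n ω) μ :=
        ((hZint n).sub (hYint n)).sub (hWint n)
      have hgm : StronglyMeasurable[ℱ n] (fun ω => Z n ω - Y n ω - W n ω) := by
        have : Measurable[ℱ n] (fun ω => Z n ω - Y n ω - W n ω) :=
          ((hZadapted n).sub (hYadapted n)).sub
            (hWadapted n)
        exact this.stronglyMeasurable
      have hDeq : D n = Y (n + 1) + fun ω => Z n ω - Y n ω - W n ω := by
        funext ω
        simp only [hDdef, Pi.add_apply]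
        ring
      rw [hDeq]
      refine (condExp_add (hYint (n + 1)) hg (ℱ n)).trans_le ?_
      rw [condExp_of_stronglyMeasurable (ℱ.le n) hgm hg]
      filter_upwards [hrec n] with ω hω
      simp only [Pi.add_apply, Pi.zero_apply]
      linarith
    have hmul : μ[ξ a n * D n | ℱ n] =ᵐ[μ] ξ a n * μ[D n | ℱ n] :=
      condExp_mul_of_stronglyMeasurable_left (hξmeas a n) (hξDint a n) (hDint n)
    have hcx : μ[N a (n + 1) | ℱ n] =ᵐ[μ] N a n + ξ a n * μ[D n | ℱ n] := by
      rw [hsplit]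
      refine (condExp_add (hNint a n) (hξDint a n) (ℱ n)).trans ?_
      rw [condExp_of_stronglyMeasurable (ℱ.le n) (hNadapted a n).stronglyMeasurable (hNint a n)]
      exact EventuallyEq.add EventuallyEq.rfl hmul
    refine hcx.trans_le ?_
    filter_upwards [hD0] with ω hω
    have h0 : (μ[D n | ℱ n]) ω ≤ 0 := hω
    have : ξ a n ω * (μ[D n | ℱ n]) ω ≤ 0 :=
      mul_nonpos_of_nonneg_of_nonpos (hξnn a n ω) h0
    simp only [Pi.add_apply, Pi.mul_apply]
    linarith
  -- if the weight sums stay below `a`, `N a` agrees with the uncompensated process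
  have hNfull : ∀ (a n : ℕ) (ω : Ω), (∀ k < n, S (k + 1) ω ≤ (a : ℝ)) →
      N a n ω = Y n ω + P n ω - S n ω := by
    intro a n ω h
    have hcong : ∀ k ∈ Finset.range n, ξ a k ω * D k ω = D k ω := by
      intro k hk
      rw [hξapp, if_pos (h k (Finset.mem_range.1 hk)), one_mul]
    calc N a n ω = Y 0 ω + ∑ k ∈ Finset.range n, ξ a k ω * D k ω := rfl
      _ = Y 0 ω + ∑ k ∈ Finset.range n, D k ω := by rw [Finset.sum_congr rfl hcong]
      _ = Y n ω + P n ω - S n ω := htel n ω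
  -- uniform lower bound
  have hNlb : ∀ (a n : ℕ) (ω : Ω), -(a : ℝ) ≤ N a n ω := by
    intro a n ω
    induction n with
    | zero =>
      have h0 : N a 0 ω = Y 0 ω := by simp [hNdef]
      rw [h0]
      have : (0 : ℝ) ≤ (a : ℝ) := Nat.cast_nonneg a
      linarith [hYnn 0 ω]
    | succ n ih =>
      by_cases hcase : S (n + 1) ω ≤ (a : ℝ)
      · have hall : ∀ k < n + 1, S (k + 1) ω ≤ (a : ℝ) := fun k hk =>
          le_trans (hSmono ω (Nat.succ_le_succ (Nat.lt_succ_iff.1 hk))) hcase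
        rw [hNfull a (n + 1) ω hall]
        have h1 := hPnn (n + 1) ω
        have h2 := hYnn (n + 1) ω
        linarith
      · have heq : N a (n + 1) ω = N a n ω := by
          simp only [hNdef, Finset.sum_range_succ]
          rw [hξapp, if_neg hcase]
          ring
        rw [heq]; exact ih
  -- a.s. convergence of each stopped process
  have hconv : ∀ a : ℕ, ∀ᵐ ω ∂μ, ∃ c, Tendsto (fun n => N a n ω) atTop (𝓝 c) := by
    intro a
    have hmean : ∀ n, ∫ ω, N a n ω ∂μ ≤ ∫ ω, Y 0 ω ∂μ := by
      intro n
      have h0 : ∫ ω, N a 0 ω ∂μ = ∫ ω, Y 0 ω ∂μ := by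
        apply integral_congr_ae
        filter_upwards with ω
        simp [hNdef]
      have h1 : ∫ ω, (μ[N a n | ℱ 0]) ω ∂μ = ∫ ω, N a n ω ∂μ :=
        integral_condExp (ℱ.le 0)
      have h2 : ∫ ω, (μ[N a n | ℱ 0]) ω ∂μ ≤ ∫ ω, N a 0 ω ∂μ :=
        integral_mono_ae integrable_condExp (hNint a 0)
          ((hNsuper a).condExp_ae_le (Nat.zero_le n))
      rw [← h0, ← h1]
      exact h2
    set R : NNReal := (∫ ω, Y 0 ω ∂μ + 2 * (a : ℝ)).toNNReal with hR
    have hbdd : ∀ n, eLpNorm (N a n) 1 μ ≤ (R : ENNReal) := by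
      intro n
      have habs : ∫ ω, ‖N a n ω‖ ∂μ ≤ ∫ ω, Y 0 ω ∂μ + 2 * (a : ℝ) := by
        have h1 : ∫ ω, ‖N a n ω‖ ∂μ ≤ ∫ ω, (N a n ω + 2 * (a : ℝ)) ∂μ := by
          apply integral_mono (hNint a n).norm ((hNint a n).add (integrable_const _))
          intro ω
          have hlb := hNlb a n ω
          simp only [Pi.add_apply]
          rw [Real.norm_eq_abs, abs_le]
          constructor <;> linarith
        rw [integral_add (hNint a n) (integrable_const _), integral_const] at h1
        simp only [measure_univ, ENNReal.toReal_one, probReal_univ, smul_eq_mul, one_mul] at h1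
        linarith [hmean n]
      have he : eLpNorm (N a n) 1 μ = ENNReal.ofReal (∫ ω, ‖N a n ω‖ ∂μ) := by
        rw [eLpNorm_one_eq_lintegral_enorm,
          ← ofReal_integral_norm_eq_lintegral_enorm (hNint a n)]
      rw [he, hR]
      exact ENNReal.ofReal_le_ofReal habs
    have hbdd' : ∀ n, eLpNorm ((-(N a)) n) 1 μ ≤ (R : ENNReal) := by
      intro n
      have : (-(N a)) n = -(N a n) := rfl
      rw [this, eLpNorm_neg]
      exact hbdd n
    have hsub : Submartingale (-(N a)) ℱ μ := (hNsuper a).neg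
    filter_upwards [hsub.exists_ae_tendsto_of_bdd hbdd'] with ω hω
    obtain ⟨c, hc⟩ := hω
    refine ⟨-c, ?_⟩
    have : (fun n => N a n ω) = fun n => -((-(N a)) n ω) := by
      funext n; simp
    rw [this]
    exact hc.neg
  -- putting everything together
  filter_upwards [hWsum, ae_all_iff.2 hconv] with ω hW hN
  have hT : ∀ n, S n ω ≤ ∑' k, W k ω := fun n =>
    Summable.sum_le_tsum (Finset.range n) (fun k _ => hWnn k ω) hW
  obtain ⟨a, ha⟩ := exists_nat_ge (∑' k, W k ω)
  obtain ⟨c, hc⟩ := hN a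
  have hNM : ∀ n, N a n ω = Y n ω + P n ω - S n ω := fun n =>
    hNfull a n ω fun k _ => le_trans (hT (k + 1)) ha
  have hMc : Tendsto (fun n => Y n ω + P n ω - S n ω) atTop (𝓝 c) := by
    have : (fun n => N a n ω) = fun n => Y n ω + P n ω - S n ω := by
      funext n; exact hNM n
    rwa [this] at hc
  have hSc : Tendsto (fun n => S n ω) atTop (𝓝 (∑' k, W k ω)) :=
    hW.hasSum.tendsto_sum_nat
  have hYP : Tendsto (fun n => Y n ω + P n ω) atTop (𝓝 (c + ∑' k, W k ω)) := by
    have h := hMc.add hSc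
    have heq : (fun n => Y n ω + P n ω - S n ω + S n ω) = fun n => Y n ω + P n ω := by
      funext n; ring
    rwa [heq] at h
  obtain ⟨B, hB⟩ : ∃ B, ∀ n, Y n ω + P n ω ≤ B := by
    obtain ⟨B, hB⟩ := hYP.bddAbove_range
    exact ⟨B, fun n => hB ⟨n, rfl⟩⟩
  have hZsum : Summable fun k => Z k ω := by
    apply summable_of_sum_range_le (fun k => hZnn k ω)
    intro n
    calc ∑ k ∈ Finset.range n, Z k ω = P n ω := rfl
      _ ≤ Y n ω + P n ω := le_add_of_nonneg_left (hYnn n ω)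
      _ ≤ B := hB n
  refine ⟨⟨c + ∑' k, W k ω - ∑' k, Z k ω, ?_⟩, hZsum⟩
  have hPc : Tendsto (fun n => P n ω) atTop (𝓝 (∑' k, Z k ω)) :=
    hZsum.hasSum.tendsto_sum_nat
  have h := hYP.sub hPc
  have heq : (fun n => Y n ω + P n ω - P n ω) = fun n => Y n ω := by
    funext n; ring
  rwa [heq] at h
end
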